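/- Let (A; θ_0,…,θ_d; A*; θ*_0,…,θ*_d) be a Leonard system on V, with primitive idempotents E_i of A and E*_i of A*. Let u be a nonzero vector in the image E*_0 V. Then for each 0 ≤ i ≤ d the vector E_i u is nonzero (hence spans the one-dimensional eigenspace E_i V), and the sequence E_0 u, E_1 u, …, E_d u is a basis of V. -/
import Mathlib


open Polynomial Finset

/-- The primitive idempotent of `A` associated with the eigenvalue `θ i`:
`E_i = ∏_{j ≠ i} (A - θ_j I) / (θ_i - θ_j)`. -/
noncomputable def primIdem {K V : Type*} [Field K] [AddCommGroup V] [Module K V]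
    {d : ℕ} (A : Module.End K V) (θ : Fin (d + 1) → K) (i : Fin (d + 1)) :
    Module.End K V :=
  aeval A (∏ j ∈ Finset.univ.erase i, (C ((θ i - θ j)⁻¹) * (X - C (θ j))))

/-- A Leonard system `(A; θ_0,…,θ_d; A*; θ*_0,…,θ*_d)` on `V`. -/
def IsLeonardSystem {K V : Type*} [Field K] [AddCommGroup V] [Module K V]
    {d : ℕ} (A Astar : Module.End K V) (θ θs : Fin (d + 1) → K) : Prop :=
  Function.Injective θ ∧ Function.Injective θs ∧
  minpoly K A = ∏ i, (X - C (θ i)) ∧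
  minpoly K Astar = ∏ i, (X - C (θs i)) ∧
  (∀ i j : Fin (d + 1),
    ((1 : ℤ) < |((i : ℕ) : ℤ) - ((j : ℕ) : ℤ)| →
      primIdem A θ i * Astar * primIdem A θ j = 0) ∧
    (|((i : ℕ) : ℤ) - ((j : ℕ) : ℤ)| = 1 →
      primIdem A θ i * Astar * primIdem A θ j ≠ 0)) ∧
  (∀ i j : Fin (d + 1),
    ((1 : ℤ) < |((i : ℕ) : ℤ) - ((j : ℕ) : ℤ)| →
      primIdem Astar θs i * A * primIdem Astar θs j = 0) ∧
    (|((i : ℕ) : ℤ) - ((j : ℕ) : ℤ)| = 1 →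
      primIdem Astar θs i * A * primIdem Astar θs j ≠ 0))

section Generic

variable {K V : Type*} [Field K] [AddCommGroup V] [Module K V] [FiniteDimensional K V]
  {d : ℕ} (B : Module.End K V) (θ : Fin (d + 1) → K)

lemma primIdem_eq (i : Fin (d + 1)) :
    primIdem B θ i = aeval B (Lagrange.basis Finset.univ θ i) := rfl

variable (hθ : Function.Injective θ)
  (hmin : minpoly K B = ∏ i, (X - C (θ i)))

include hθ in
lemma sum_primIdem : ∑ i, primIdem B θ i = 1 := by
  simp only [primIdem_eq]
  rw [← map_sum, Lagrange.sum_basis hθ.injOn Finset.univ_nonempty, map_one]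

lemma basis_eq_C_mul (i : Fin (d + 1)) :
    Lagrange.basis Finset.univ θ i =
      C (∏ k ∈ Finset.univ.erase i, (θ i - θ k)⁻¹) *
        ∏ k ∈ Finset.univ.erase i, (X - C (θ k)) := by
  rw [Lagrange.basis, map_prod, ← Finset.prod_mul_distrib]
  rfl

include hmin in
lemma primIdem_mul_primIdem {i j : Fin (d + 1)} (hij : i ≠ j) :
    primIdem B θ i * primIdem B θ j = 0 := by
  have h2 : (X - C (θ i)) ∣ Lagrange.basis Finset.univ θ j := by
    refine dvd_trans ?_ (Finset.dvd_prod_of_mem _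
      (by simp [hij] : i ∈ Finset.univ.erase j))
    exact Dvd.intro_left _ rfl
  obtain ⟨q, hq⟩ := h2
  have hdvd : (∏ k, (X - C (θ k))) ∣
      (Lagrange.basis Finset.univ θ i * Lagrange.basis Finset.univ θ j) := by
    refine ⟨C (∏ k ∈ Finset.univ.erase i, (θ i - θ k)⁻¹) * q, ?_⟩
    rw [basis_eq_C_mul, hq,
      ← Finset.mul_prod_erase Finset.univ (fun k => (X - C (θ k))) (Finset.mem_univ i)]
    ring
  obtain ⟨r, hr⟩ := hdvd
  rw [primIdem_eq, primIdem_eq, ← map_mul, hr, map_mul, ← hmin, minpoly.aeval, zero_mul]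

include hθ hmin in
lemma primIdem_idem (i : Fin (d + 1)) :
    primIdem B θ i * primIdem B θ i = primIdem B θ i := by
  have h1 : primIdem B θ i * (∑ j, primIdem B θ j) = primIdem B θ i := by
    rw [sum_primIdem B θ hθ, mul_one]
  rw [Finset.mul_sum] at h1
  rwa [Finset.sum_eq_single i (fun j _ hj => primIdem_mul_primIdem B θ hmin (Ne.symm hj))
    (by simp)] at h1

include hmin in
lemma primIdem_eigen (i : Fin (d + 1)) (x : V) :
    B (primIdem B θ i x) = θ i • primIdem B θ i x := by
  have key : (X - C (θ i)) * Lagrange.basis Finset.univ θ i =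
      C (∏ k ∈ Finset.univ.erase i, (θ i - θ k)⁻¹) * ∏ k, (X - C (θ k)) := by
    rw [basis_eq_C_mul,
      ← Finset.mul_prod_erase Finset.univ (fun k => (X - C (θ k))) (Finset.mem_univ i)]
    ring
  have h0 : aeval B ((X - C (θ i)) * Lagrange.basis Finset.univ θ i) = 0 := by
    rw [key, map_mul, ← hmin, minpoly.aeval, mul_zero]
  rw [map_mul, map_sub, aeval_X, aeval_C] at h0
  have := LinearMap.congr_fun h0 x
  simp only [Module.End.mul_apply, LinearMap.sub_apply, LinearMap.zero_apply,
    Module.algebraMap_end_apply, LinearMap.smul_apply] at this ⊢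
  rw [sub_eq_zero] at this
  rw [← primIdem_eq] at this
  exact this

include hθ in
lemma primIdem_apply_eigenvector {i : Fin (d + 1)} {x : V} (hx : B x = θ i • x) :
    primIdem B θ i x = x := by
  rcases eq_or_ne x 0 with rfl | hx0
  · simp
  · rw [primIdem_eq,
      Module.End.aeval_apply_of_hasEigenvector ⟨Module.End.mem_eigenspace_iff.2 hx, hx0⟩,
      Lagrange.eval_basis_self hθ.injOn (Finset.mem_univ i), one_smul]

lemma primIdem_apply_eigenvector_ne {i j : Fin (d + 1)} (hij : i ≠ j) {x : V}
    (hx : B x = θ j • x) : primIdem B θ i x = 0 := by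
  rcases eq_or_ne x 0 with rfl | hx0
  · simp
  · rw [primIdem_eq,
      Module.End.aeval_apply_of_hasEigenvector ⟨Module.End.mem_eigenspace_iff.2 hx, hx0⟩,
      Lagrange.eval_basis_of_ne hij (Finset.mem_univ j), zero_smul]

include hmin in
lemma exists_eigenvector (i : Fin (d + 1)) : ∃ e : V, B e = θ i • e ∧ e ≠ 0 := by
  have hroot : (minpoly K B).IsRoot (θ i) := by
    rw [hmin, IsRoot, eval_prod]
    exact Finset.prod_eq_zero (Finset.mem_univ i) (by simp)
  obtain ⟨e, he, he0⟩ := (Module.End.hasEigenvalue_of_isRoot hroot).exists_hasEigenvector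
  exact ⟨e, Module.End.mem_eigenspace_iff.1 he, he0⟩


include hθ hmin in
lemma eigenvector_smul (hdim : Module.finrank K V = d + 1) (i : Fin (d + 1))
    {x y : V} (hx : B x = θ i • x) (hy : B y = θ i • y) (hx0 : x ≠ 0) :
    ∃ c : K, y = c • x := by
  choose e he he0 using exists_eigenvector B θ hmin
  have hli : LinearIndependent K e :=
    Module.End.eigenvectors_linearIndependent' B θ hθ e
      (fun j => ⟨Module.End.mem_eigenspace_iff.2 (he j), he0 j⟩)
  have hcard : Fintype.card (Fin (d + 1)) = Module.finrank K V := by simp [hdim]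
  let b := basisOfLinearIndependentOfCardEqFinrank hli hcard
  have hb : ⇑b = e := coe_basisOfLinearIndependentOfCardEqFinrank hli hcard
  have key : ∀ z : V, B z = θ i • z → z = b.repr z i • e i := by
    intro z hz
    have h1 : z = ∑ j, b.repr z j • e j := by
      conv_lhs => rw [← b.sum_repr z]
      simp [hb]
    have h2 : primIdem B θ i z = z := primIdem_apply_eigenvector B θ hθ hz
    conv_lhs => rw [← h2, h1]
    rw [map_sum, Finset.sum_eq_single i ?_ (by simp)]
    · rw [map_smul, primIdem_apply_eigenvector B θ hθ (he i)]
    · intro j _ hj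
      rw [map_smul, primIdem_apply_eigenvector_ne B θ (Ne.symm hj) (he j), smul_zero]
  have hxe := key x hx
  have hye := key y hy
  have hcx : b.repr x i ≠ 0 := by
    intro h; rw [h, zero_smul] at hxe; exact hx0 hxe
  refine ⟨b.repr y i / b.repr x i, ?_⟩
  calc y = b.repr y i • e i := hye
    _ = (b.repr y i / b.repr x i) • ((b.repr x i) • e i) := by
        rw [smul_smul, div_mul_cancel₀ _ hcx]
    _ = (b.repr y i / b.repr x i) • x := by rw [← hxe]

include hθ hmin in
lemma apply_ne_zero_of_mem_range (hdim : Module.finrank K V = d + 1) {i : Fin (d + 1)}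
    {T : Module.End K V} (hT : T * primIdem B θ i ≠ 0) {x : V}
    (hx : x ∈ LinearMap.range (primIdem B θ i)) (hx0 : x ≠ 0) : T x ≠ 0 := by
  obtain ⟨w, rfl⟩ := hx
  have hxe := primIdem_eigen B θ hmin i w
  have hex : ∃ z, T (primIdem B θ i z) ≠ 0 := by
    by_contra h
    push_neg at h
    exact hT (LinearMap.ext fun z => by simpa [Module.End.mul_apply] using h z)
  obtain ⟨z, hz⟩ := hex
  have hze := primIdem_eigen B θ hmin i z
  obtain ⟨c, hc⟩ := eigenvector_smul B θ hθ hmin hdim i hxe hze hx0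
  intro hTx
  exact hz (by rw [hc, map_smul, hTx, smul_zero])


lemma tri_pow {K V : Type*} [Field K] [AddCommGroup V] [Module K V] [FiniteDimensional K V]
    {d : ℕ} (A Astar : Module.End K V) (θs : Fin (d + 1) → K)
    (hθs : Function.Injective θs) (hmin : minpoly K Astar = ∏ i, (X - C (θs i)))
    (htri : ∀ i j : Fin (d + 1), (1 : ℤ) < |((i : ℕ) : ℤ) - ((j : ℕ) : ℤ)| →
      primIdem Astar θs i * A * primIdem Astar θs j = 0) :
    ∀ n : ℕ, ∀ i j : Fin (d + 1), (n : ℤ) < |((i : ℕ) : ℤ) - ((j : ℕ) : ℤ)| →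
      primIdem Astar θs i * A ^ n * primIdem Astar θs j = 0 := by
  intro n
  induction n with
  | zero =>
    intro i j hij
    rw [pow_zero, mul_one]
    refine primIdem_mul_primIdem Astar θs hmin fun h => ?_
    rw [h] at hij
    simp at hij
  | succ n IH =>
    intro i j hij
    have hsum := sum_primIdem Astar θs hθs
    have expand : primIdem Astar θs i * A ^ (n + 1) * primIdem Astar θs j
        = ∑ m, primIdem Astar θs i * A ^ n * (primIdem Astar θs m * (A * primIdem Astar θs j)) := by
      rw [← Finset.mul_sum, ← Finset.sum_mul, hsum, one_mul, pow_succ]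
      simp only [mul_assoc]
    rw [expand]
    refine Finset.sum_eq_zero fun m _ => ?_
    by_cases h1 : |((m : ℕ) : ℤ) - ((j : ℕ) : ℤ)| ≤ 1
    · have h2 : (n : ℤ) < |((i : ℕ) : ℤ) - ((m : ℕ) : ℤ)| := by
        have h3 := abs_sub_le ((i : ℕ) : ℤ) ((m : ℕ) : ℤ) ((j : ℕ) : ℤ)
        push_cast at hij ⊢
        linarith
      have h4 : primIdem Astar θs m * (A * primIdem Astar θs j)
          = primIdem Astar θs m * (primIdem Astar θs m * (A * primIdem Astar θs j)) := by
        conv_lhs => rw [← primIdem_idem Astar θs hθs hmin m]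
        rw [mul_assoc]
      rw [h4, ← mul_assoc, ← mul_assoc,
        show primIdem Astar θs i * A ^ n * primIdem Astar θs m = 0 from IH i m h2,
        zero_mul, zero_mul]
    · push_neg at h1
      have h3 : primIdem Astar θs m * (A * primIdem Astar θs j) = 0 := by
        rw [← mul_assoc]
        exact htri m j h1
      rw [h3, mul_zero]

end Generic


/-- For a nonzero `u ∈ E*_0 V`, each `E_i u` is nonzero and spans the eigenspace `E_i V`,
and `E_0 u, …, E_d u` is a basis of `V`. -/
theorem stmt_6 {K V : Type*} [Field K] [AddCommGroup V] [Module K V] [FiniteDimensional K V]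
    {d : ℕ} (hdim : Module.finrank K V = d + 1)
    (A Astar : Module.End K V) (θ θs : Fin (d + 1) → K)
    (hLS : IsLeonardSystem A Astar θ θs)
    (u : V) (hu : u ∈ LinearMap.range (primIdem Astar θs 0)) (hu0 : u ≠ 0) :
    (∀ i : Fin (d + 1), primIdem A θ i u ≠ 0) ∧
    (∀ i : Fin (d + 1),
      Submodule.span K ({primIdem A θ i u} : Set V) = LinearMap.range (primIdem A θ i)) ∧
    LinearIndependent K (fun i : Fin (d + 1) => primIdem A θ i u) ∧
    Submodule.span K (Set.range (fun i : Fin (d + 1) => primIdem A θ i u)) = ⊤ := by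
  obtain ⟨hθ, hθs, hminA, hminAs, hTriA, hTriAs⟩ := hLS
  have htri0 : ∀ i j : Fin (d + 1), (1 : ℤ) < |((i : ℕ) : ℤ) - ((j : ℕ) : ℤ)| →
      primIdem Astar θs i * A * primIdem Astar θs j = 0 := fun i j => (hTriAs i j).1
  have htri1 : ∀ i j : Fin (d + 1), |((i : ℕ) : ℤ) - ((j : ℕ) : ℤ)| = 1 →
      primIdem Astar θs i * A * primIdem Astar θs j ≠ 0 := fun i j => (hTriAs i j).2
  have hL1 := tri_pow A Astar θs hθs hminAs htri0
  -- u is fixed by E*_0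
  have hEs0 : primIdem Astar θs 0 u = u := by
    obtain ⟨w, hw⟩ := hu
    rw [← hw, ← Module.End.mul_apply, primIdem_idem Astar θs hθs hminAs]
  -- E*_m (A^n u) = 0 when n < m
  have hvanish : ∀ (n : ℕ) (m : Fin (d + 1)), (n : ℤ) < ((m : ℕ) : ℤ) →
      primIdem Astar θs m ((A ^ n) u) = 0 := by
    intro n m hnm
    conv_lhs => rw [← hEs0]
    have h5 : primIdem Astar θs m * A ^ n * primIdem Astar θs 0 = 0 := by
      refine hL1 n m 0 ?_
      simp only [Fin.val_zero, Nat.cast_zero, sub_zero]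
      rw [abs_of_nonneg (by positivity)]
      exact hnm
    calc primIdem Astar θs m ((A ^ n) (primIdem Astar θs 0 u))
        = (primIdem Astar θs m * A ^ n * primIdem Astar θs 0) u := rfl
      _ = 0 := by rw [h5]; rfl
  -- key nonvanishing: E*_n (A^n u) ≠ 0
  have hLS3 : ∀ (n : ℕ) (hn : n < d + 1),
      primIdem Astar θs ⟨n, hn⟩ ((A ^ n) u) ≠ 0 := by
    intro n
    induction n with
    | zero =>
      intro hn
      have : primIdem Astar θs ⟨0, hn⟩ ((A ^ 0) u) = u := by
        rw [pow_zero, Module.End.one_apply]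
        exact hEs0
      rw [this]
      exact hu0
    | succ n IH =>
      intro hn
      have hn' : n < d + 1 := by omega
      set k : Fin (d + 1) := ⟨n, hn'⟩ with hk
      set k1 : Fin (d + 1) := ⟨n + 1, hn⟩ with hk1
      have hsumv : (A ^ n) u = ∑ m, primIdem Astar θs m ((A ^ n) u) := by
        have h1 : (∑ m, primIdem Astar θs m) ((A ^ n) u) = (A ^ n) u := by
          rw [sum_primIdem Astar θs hθs, Module.End.one_apply]
        rw [LinearMap.sum_apply] at h1
        exact h1.symm
      have hrw : (A ^ (n + 1)) u = A ((A ^ n) u) := by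
        rw [pow_succ', Module.End.mul_apply]
      rw [hrw]
      have expand : primIdem Astar θs k1 (A ((A ^ n) u))
          = ∑ m, primIdem Astar θs k1 (A (primIdem Astar θs m ((A ^ n) u))) := by
        conv_lhs => rw [hsumv]
        rw [map_sum, map_sum]
      rw [expand]
      have hzero : ∀ m ∈ Finset.univ, m ≠ k →
          primIdem Astar θs k1 (A (primIdem Astar θs m ((A ^ n) u))) = 0 := by
        intro m _ hmk
        rcases Nat.lt_or_ge (m : ℕ) n with hlt | hge
        · have h0 := htri0 k1 m (by
            rw [hk1]
            simp only [Fin.val_mk]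
            rw [abs_of_nonneg (by push_cast; omega)]
            push_cast
            omega)
          calc primIdem Astar θs k1 (A (primIdem Astar θs m ((A ^ n) u)))
              = (primIdem Astar θs k1 * A * primIdem Astar θs m) ((A ^ n) u) := rfl
            _ = 0 := by rw [h0]; rfl
        · have hne : (m : ℕ) ≠ n := fun h => hmk (Fin.ext (by rw [h, hk]))
          have h0 : primIdem Astar θs m ((A ^ n) u) = 0 :=
            hvanish n m (by push_cast; omega)
          rw [h0, map_zero, map_zero]
      rw [Finset.sum_eq_single_of_mem k (Finset.mem_univ k) hzero]
      have hx : primIdem Astar θs k ((A ^ n) u) ∈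
          LinearMap.range (primIdem Astar θs k) := ⟨_, rfl⟩
      have hx0 : primIdem Astar θs k ((A ^ n) u) ≠ 0 := IH hn'
      have hT : (primIdem Astar θs k1 * A) * primIdem Astar θs k ≠ 0 := by
        refine htri1 k1 k ?_
        rw [hk1, hk]
        simp
      have hne := apply_ne_zero_of_mem_range Astar θs hθs hminAs hdim hT hx hx0
      intro hc
      exact hne (by rw [← hc]; rfl)
  have hLS3' : ∀ k : Fin (d + 1), primIdem Astar θs k ((A ^ (k : ℕ)) u) ≠ 0 :=
    fun k => hLS3 (k : ℕ) k.isLt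
  -- linear independence of the A^k u
  have hLI_pow : LinearIndependent K (fun k : Fin (d + 1) => (A ^ (k : ℕ)) u) := by
    rw [Fintype.linearIndependent_iff]
    intro g hg
    have key : ∀ (n : ℕ) (k : Fin (d + 1)), d - (k : ℕ) = n → g k = 0 := by
      intro n
      induction n using Nat.strong_induction_on with
      | _ n IHn =>
        intro k hkn
        have hm : ∀ m : Fin (d + 1), (k : ℕ) < (m : ℕ) → g m = 0 := by
          intro m hkm
          have h1 := m.isLt
          have h2 := k.isLt
          exact IHn (d - (m : ℕ)) (by omega) m rfl
        have h2 : primIdem Astar θs k (∑ m, g m • (A ^ (m : ℕ)) u) = 0 := by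
          rw [hg, map_zero]
        rw [map_sum] at h2
        have h3 : ∀ m ∈ Finset.univ, m ≠ k →
            primIdem Astar θs k (g m • (A ^ (m : ℕ)) u) = 0 := by
          intro m _ hmk
          rcases Nat.lt_or_ge (m : ℕ) (k : ℕ) with hlt | hge
          · rw [map_smul, hvanish (m : ℕ) k (by push_cast; omega), smul_zero]
          · have : (k : ℕ) < (m : ℕ) :=
              lt_of_le_of_ne hge fun h => hmk (Fin.ext h.symm)
            rw [hm m this, zero_smul, map_zero]
        rw [Finset.sum_eq_single_of_mem k (Finset.mem_univ k) h3, map_smul] at h2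
        rcases smul_eq_zero.1 h2 with h | h
        · exact h
        · exact absurd h (hLS3' k)
    intro k
    exact key (d - (k : ℕ)) k rfl
  have hcard : Fintype.card (Fin (d + 1)) = Module.finrank K V := by simp [hdim]
  -- E_i commutes with powers of A
  have hcomm : ∀ (i : Fin (d + 1)) (n : ℕ),
      primIdem A θ i ((A ^ n) u) = (A ^ n) (primIdem A θ i u) := by
    intro i n
    have h1 : primIdem A θ i * A ^ n = A ^ n * primIdem A θ i := by
      have hXn : A ^ n = aeval A ((X : K[X]) ^ n) := by rw [aeval_X_pow]
      rw [primIdem_eq, hXn, ← map_mul, ← map_mul, mul_comm]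
    have := LinearMap.congr_fun h1 u
    simpa [Module.End.mul_apply] using this
  -- part 1
  have part1 : ∀ i : Fin (d + 1), primIdem A θ i u ≠ 0 := by
    intro i hEiu
    obtain ⟨e, he, he0⟩ := exists_eigenvector A θ hminA i
    have hEe : primIdem A θ i e = e := primIdem_apply_eigenvector A θ hθ he
    let bpow := basisOfLinearIndependentOfCardEqFinrank hLI_pow hcard
    have hbpow : ⇑bpow = fun k : Fin (d + 1) => (A ^ (k : ℕ)) u :=
      coe_basisOfLinearIndependentOfCardEqFinrank hLI_pow hcard
    have h1 := bpow.sum_repr e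
    simp only [hbpow] at h1
    have hze : primIdem A θ i e = 0 := by
      rw [← h1, map_sum]
      refine Finset.sum_eq_zero fun k _ => ?_
      rw [map_smul, hcomm i (k : ℕ), hEiu, map_zero, smul_zero]
    rw [hEe] at hze
    exact he0 hze
  -- parts 3 and 4
  have heig : ∀ i : Fin (d + 1), A (primIdem A θ i u) = θ i • primIdem A θ i u :=
    fun i => primIdem_eigen A θ hminA i u
  have part3 : LinearIndependent K (fun i : Fin (d + 1) => primIdem A θ i u) :=
    Module.End.eigenvectors_linearIndependent' A θ hθ _
      (fun i => ⟨Module.End.mem_eigenspace_iff.2 (heig i), part1 i⟩)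
  have part4 : Submodule.span K
      (Set.range (fun i : Fin (d + 1) => primIdem A θ i u)) = ⊤ :=
    part3.span_eq_top_of_card_eq_finrank hcard
  refine ⟨part1, ?_, part3, part4⟩
  -- part 2
  intro i
  let bE := basisOfLinearIndependentOfCardEqFinrank part3 hcard
  have hbE : ⇑bE = fun i : Fin (d + 1) => primIdem A θ i u :=
    coe_basisOfLinearIndependentOfCardEqFinrank part3 hcard
  apply le_antisymm
  · rw [Submodule.span_le, Set.singleton_subset_iff]
    exact ⟨u, rfl⟩
  · rintro x ⟨y, rfl⟩
    have h1 := bE.sum_repr y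
    simp only [hbE] at h1
    rw [Submodule.mem_span_singleton]
    refine ⟨bE.repr y i, ?_⟩
    have h2 : primIdem A θ i y
        = ∑ j, bE.repr y j • primIdem A θ i (primIdem A θ j u) := by
      conv_lhs => rw [← h1]
      rw [map_sum]
      exact Finset.sum_congr rfl fun j _ => by rw [map_smul]
    rw [h2, Finset.sum_eq_single_of_mem i (Finset.mem_univ i) ?_]
    · rw [← Module.End.mul_apply, primIdem_idem A θ hθ hminA]
    · intro j _ hj
      rw [← Module.End.mul_apply, primIdem_mul_primIdem A θ hminA (Ne.symm hj),
        LinearMap.zero_apply, smul_zero]
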